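/- arXiv:2505.06757 — 3 statements merged into one kernel-verified Lean document; each statement's English description precedes it below -/
import Mathlib

section
/- Let G be a finitely generated Abelian group and f : G → ℤ finitely supported. If there is a character χ : G → ℂ of finite order (χ^m = 1 for some m ≥ 1) with ∑_{x ∈ G} f(x) · conj(χ(x)) = 0, then there exists a nonzero periodic bounded function a : G → ℤ (i.e., a is invariant under translation by some finite-index subgroup of G) with f * a = 0. -/
/-!
As `conj (χ y) = χ (-y)`, the convolution `(f ⋆ χ)(x)` equals `χ x · ∑ᶠ y, f y · conj (χ y) = 0`.
A `ℚ`-linear `ψ : ℂ → ℚ` with `ψ 1 = 1` turns this into `f ⋆ (ψ ∘ χ) = 0`. The function `ψ ∘ χ`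
is nonzero at `0`, constant on the cosets of `ker χ`, which has finite index because `χ` has
finite order, and takes finitely many values; clearing their denominators gives `a`.
-/

open Function

theorem map_finsum_zsmul {ι A B : Type*} [AddCommGroup A] [AddCommGroup B] (φ : A →+ B)
    {f : ι → ℤ} (hf : (support f).Finite) (g : ι → A) :
    φ (∑ᶠ i, f i • g i) = ∑ᶠ i, f i • φ (g i) := by
  rw [map_finsum φ (f := fun i => f i • g i) (hf.subset (support_smul_subset_left f g))]
  simp_rw [map_zsmul]

theorem finsum_mul_sub_eq_zero_of_intCast_eq {G A : Type*} [AddCommGroup G] [AddCommGroup A]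
    {f : G → ℤ} (hf : (support f).Finite) {g : G → A} {x : G}
    (hg : ∑ᶠ y, f y • g (x - y) = 0) (φ : A →+ ℚ) {a : G → ℤ} (ha : ∀ z, (a z : ℚ) = φ (g z)) :
    ∑ᶠ y, f y * a (x - y) = 0 := by
  apply Int.cast_injective (α := ℚ)
  calc ((∑ᶠ y, f y * a (x - y) : ℤ) : ℚ) = ∑ᶠ y, f y • (a (x - y) : ℚ) := by
        simpa using map_finsum_zsmul (Int.castAddHom ℚ) hf (fun y => a (x - y))
    _ = φ (∑ᶠ y, f y • g (x - y)) := by simp_rw [ha, map_finsum_zsmul φ hf]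
    _ = 0 := by rw [hg, map_zero]

theorem AddChar.finsum_zsmul_map_sub {G : Type*} [AddCommGroup G] (χ : AddChar G ℂ)
    (hχ : ∀ x, ‖χ x‖ = 1) (f : G → ℤ) (x : G) :
    ∑ᶠ y, f y • χ (x - y) = χ x * ∑ᶠ y, (f y : ℂ) * starRingEnd ℂ (χ y) := by
  rw [mul_finsum]
  refine finsum_congr fun y => ?_
  rw [← Complex.inv_eq_conj (hχ y), ← map_neg_eq_inv, sub_eq_add_neg, map_add_eq_mul, zsmul_eq_mul]
  ring

theorem AddChar.finite_range_of_pow_eq_one {G R : Type*} [AddGroup G] [CommRing R] [IsDomain R]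
    (χ : AddChar G R) {m : ℕ} (hm : 0 < m) (hχ : ∀ x, χ x ^ m = 1) : (Set.range χ).Finite :=
  (Polynomial.nthRoots m (1 : R)).finite_toSet.subset <| by
    rintro _ ⟨x, rfl⟩
    simpa [Polynomial.mem_nthRoots hm] using hχ x

theorem AddMonoidHom.finiteIndex_ker_of_finite_range {G M : Type*} [AddGroup G] [AddMonoid M]
    (φ : G →+ M) (h : (Set.range φ).Finite) : φ.ker.FiniteIndex := by
  have : Finite φ.toHomAddUnits.range :=
    (h.preimage AddUnits.val_injective.injOn).subset <| by rintro _ ⟨x, rfl⟩; exact ⟨x, rfl⟩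
  rw [← φ.ker_toHomAddUnits]
  infer_instance

theorem Set.Finite.exists_ne_zero_num_mul_eq {s : Set ℚ} (hs : s.Finite) :
    ∃ N : ℤ, N ≠ 0 ∧ ∀ q ∈ s, (((N : ℚ) * q).num : ℚ) = N * q := by
  obtain ⟨N, hN⟩ := IsLocalization.exist_integer_multiples_of_finset (nonZeroDivisors ℤ) hs.toFinset
  refine ⟨N, nonZeroDivisors.coe_ne_zero N, fun q hq => ?_⟩
  obtain ⟨k, hk⟩ := (Rat.isLocalizationIsInteger_iff _).1 (hN q (hs.mem_toFinset.2 hq))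
  rw [zsmul_eq_mul] at hk
  rw [← hk, Rat.num_intCast]

theorem exists_abs_le_of_finite_range {α : Type*} {a : α → ℤ} (h : (Set.range a).Finite) :
    ∃ C, ∀ x, |a x| ≤ C := by
  obtain ⟨C, hC⟩ := (h.image abs).bddAbove
  exact ⟨C, fun x => hC ⟨a x, ⟨x, rfl⟩, rfl⟩⟩

theorem stmt1_general (G : Type*) [AddCommGroup G]
    (f : G → ℤ) (hf : (Function.support f).Finite)
    (χ : AddChar G ℂ) (hχ : ∀ x, ‖χ x‖ = 1)
    (hord : ∃ m : ℕ, 1 ≤ m ∧ ∀ x, (χ x) ^ m = 1)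
    (hfourier : ∑ᶠ x : G, (f x : ℂ) * (starRingEnd ℂ) (χ x) = 0) :
    ∃ a : G → ℤ, a ≠ 0 ∧ (∃ C : ℤ, ∀ x, |a x| ≤ C) ∧
      (∃ Γ : AddSubgroup G, Γ.FiniteIndex ∧ ∀ x : G, ∀ h ∈ Γ, a (x + h) = a x) ∧
      ∀ x : G, ∑ᶠ y : G, f y * a (x - y) = 0 := by
  obtain ⟨m, hm, hχm⟩ := hord
  have hχfin : (Set.range χ).Finite := χ.finite_range_of_pow_eq_one hm hχm
  obtain ⟨ψ, hψ⟩ : ∃ ψ : Module.Dual ℚ ℂ, ψ 1 = 1 := by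
    simpa using Module.exists_dual_forall_apply_eq_one
      (LinearIndepOn.singleton (R := ℚ) (v := id) (i := (1 : ℂ)) one_ne_zero)
  obtain ⟨N, hN, hNψ⟩ := (hχfin.image ψ).exists_ne_zero_num_mul_eq
  set a : G → ℤ := fun x => ((N : ℚ) * ψ (χ x)).num
  have ha : ∀ x, (a x : ℚ) = (N • ψ) (χ x) := fun x => by
    simpa [a] using hNψ _ (Set.mem_image_of_mem ψ (Set.mem_range_self x))
  refine ⟨a, fun h => hN ?_, ?_, ⟨χ.toAddMonoidHom.ker, ?_, fun x h hh => ?_⟩, fun x => ?_⟩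
  · simpa [hψ, h, eq_comm] using ha 0
  · refine exists_abs_le_of_finite_range ?_
    rw [Set.range_comp' (fun z => ((N : ℚ) * ψ z).num) χ]
    exact hχfin.image _
  · refine χ.toAddMonoidHom.finiteIndex_ker_of_finite_range ?_
    rw [χ.coe_toAddMonoidHom, Set.range_comp]
    exact hχfin.image _
  · have hχh : χ h = 1 := by simpa using hh
    simp only [a, AddChar.map_add_eq_mul, hχh, mul_one]
  · refine finsum_mul_sub_eq_zero_of_intCast_eq hf ?_ (N • ψ).toAddMonoidHom ha
    rw [χ.finsum_zsmul_map_sub hχ, hfourier, mul_zero]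

/-- If `f : G → ℤ` is finitely supported on a finitely generated
Abelian group and some finite-order character `χ` has vanishing Fourier coefficient
`∑ₓ f x * conj (χ x) = 0`, then there is a nonzero bounded periodic `a : G → ℤ`
with `f * a = 0`. -/
theorem stmt1 (G : Type*) [AddCommGroup G] [AddGroup.FG G]
    (f : G → ℤ) (hf : (Function.support f).Finite)
    (χ : AddChar G ℂ) (hχ : ∀ x, ‖χ x‖ = 1)
    (hord : ∃ m : ℕ, 1 ≤ m ∧ ∀ x, (χ x) ^ m = 1)
    (hfourier : ∑ᶠ x : G, (f x : ℂ) * (starRingEnd ℂ) (χ x) = 0) :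
    ∃ a : G → ℤ, a ≠ 0 ∧ (∃ C : ℤ, ∀ x, |a x| ≤ C) ∧
      (∃ Γ : AddSubgroup G, Γ.FiniteIndex ∧ ∀ x : G, ∀ h ∈ Γ, a (x + h) = a x) ∧
      ∀ x : G, ∑ᶠ y : G, f y * a (x - y) = 0 :=
  stmt1_general G f hf χ hχ hord hfourier
end

section
/- Let G be a finitely generated Abelian group, f : G → ℤ finitely supported, and a : G → ℤ bounded with f * a = 0. Then for all sufficiently large primes p (with threshold depending only on f and the sup-norm of a), one has (τ_p f) * a = 0, where τ_p f := ∑_x f(x) 𝟙_{{px}}. -/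
/-- The dilate `τ_r f`, defined by `(τ_r f)(y) = ∑_{x : r·x = y} f x`. -/
noncomputable def dilate {G : Type*} [AddCommGroup G] (r : ℕ) (f : G → ℤ) : G → ℤ :=
  fun y => ∑ᶠ x ∈ {x : G | r • x = y}, f x

/-!
View the finitely supported `f` as an element `F` of the group ring `ℤ[G]`; convolution makes
`G → ℤ` a `ℤ[G]`-module, so `F * a = 0` gives `F ^ p * a = 0`. In
characteristic `p` the Frobenius of `(ℤ/p)[G]` is the dilation `g ↦ p • g`, hence `τ_p F - F ^ p`
has all coefficients divisible by `p`, and so does `(τ_p F) * a`. But `|(τ_p F) * a| ≤ ‖F‖₁ ‖a‖∞`,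
so it vanishes once `p` exceeds this bound.
-/

open AddMonoidAlgebra

namespace AddMonoidAlgebra

section Convolution

variable {k G : Type*} [Semiring k] [AddCommGroup G]

noncomputable def conv (a : G → k) : AddMonoidAlgebra k G →+ G → k :=
  liftNC (Pi.constRingHom G k : k →+ G → k) fun y x => a (x - Multiplicative.toAdd y)

lemma conv_apply (a : G → k) (F : AddMonoidAlgebra k G) (x : G) :
    conv a F x = F.coeff.sum fun y c => c * a (x - y) := by
  simp [conv, liftNC, Finsupp.sum]

@[simp]
lemma conv_single (a : G → k) (y : G) (c : k) (x : G) :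
    conv a (single y c) x = c * a (x - y) :=
  congrFun (liftNC_single _ _ _ _) x

@[simp]
lemma conv_zero_left (F : AddMonoidAlgebra k G) : conv (0 : G → k) F = 0 := by
  induction F using AddMonoidAlgebra.induction_linear with
  | zero => simp
  | add F F' hF hF' => rw [map_add, hF, hF', add_zero]
  | single y c => ext x; simp

lemma conv_single_mul (a : G → k) (y : G) (c : k) (F : AddMonoidAlgebra k G) (x : G) :
    conv a (single y c * F) x = c * conv a F (x - y) := by
  induction F using AddMonoidAlgebra.induction_linear with
  | zero => simp
  | add F F' hF hF' => simp only [mul_add, map_add, Pi.add_apply, hF, hF']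
  | single z d => simp [single_mul_single, sub_sub, mul_assoc]

lemma conv_mul (a : G → k) (F F' : AddMonoidAlgebra k G) :
    conv a (F * F') = conv (conv a F') F := by
  induction F using AddMonoidAlgebra.induction_linear with
  | zero => simp
  | add F₁ F₂ h₁ h₂ => rw [add_mul, map_add, map_add, h₁, h₂]
  | single y c => ext x; rw [conv_single_mul, conv_single]

lemma conv_pow_eq_zero {a : G → k} {F : AddMonoidAlgebra k G} (hF : conv a F = 0) {n : ℕ}
    (hn : n ≠ 0) : conv a (F ^ n) = 0 := by
  obtain ⟨m, rfl⟩ := Nat.exists_eq_succ_of_ne_zero hn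
  rw [pow_succ, conv_mul, hF, conv_zero_left]

lemma conv_mapDomain (a : G → k) (φ : G → G) (F : AddMonoidAlgebra k G) (x : G) :
    conv a (mapDomain φ F) x = F.coeff.sum fun y c => c * a (x - φ y) := by
  rw [conv_apply, coeff_mapDomain, Finsupp.sum_mapDomain_index] <;> simp [add_mul]

lemma dvd_conv {d : k} (a : G → k) {F : AddMonoidAlgebra k G} (hF : ∀ g, d ∣ F.coeff g)
    (x : G) : d ∣ conv a F x := by
  rw [conv_apply]
  exact Finset.dvd_sum fun y _ => (hF y).mul_right _

lemma finsum_mul_sub_eq_conv (a : G → k) (F : AddMonoidAlgebra k G) (x : G) :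
    ∑ᶠ y, F.coeff y * a (x - y) = conv a F x := by
  rw [conv_apply, Finsupp.sum]
  exact finsum_eq_sum_of_support_subset _ fun y hy => by simpa using left_ne_zero_of_mul hy

lemma abs_conv_mapDomain_le {k : Type*} [Ring k] [LinearOrder k] [IsOrderedRing k] {a : G → k}
    {C : k} (ha : ∀ y, |a y| ≤ C) (φ : G → G) (F : AddMonoidAlgebra k G) (x : G) :
    |conv a (mapDomain φ F) x| ≤ (F.coeff.sum fun _ c => |c|) * C := by
  rw [conv_mapDomain, Finsupp.sum, Finsupp.sum, Finset.sum_mul]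
  refine (Finset.abs_sum_le_sum_abs _ _).trans (Finset.sum_le_sum fun y _ => ?_)
  rw [abs_mul]
  exact mul_le_mul_of_nonneg_left (ha _) (abs_nonneg _)

end Convolution

section Frobenius

variable {G : Type*} [AddCommMonoid G] {p : ℕ} [Fact p.Prime]

lemma pow_char_eq_mapDomain (F : AddMonoidAlgebra (ZMod p) G) :
    F ^ p = mapDomain (p • ·) F := by
  have := charP_of_injective_algebraMap' (ZMod p) (A := AddMonoidAlgebra (ZMod p) G) p
  induction F using AddMonoidAlgebra.induction_linear with
  | zero => simp [(Fact.out : p.Prime).ne_zero]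
  | add F F' hF hF' => rw [add_pow_char, hF, hF', mapDomain_add]
  | single g c => rw [single_pow, ZMod.pow_card, mapDomain_single]

lemma dvd_coeff_mapDomain_sub_pow (F : AddMonoidAlgebra ℤ G) (g : G) :
    (p : ℤ) ∣ (mapDomain (p • ·) F - F ^ p).coeff g := by
  set π := mapRingHom G (Int.castRingHom (ZMod p))
  have hπ : π (mapDomain (p • ·) F) = mapDomain (p • ·) (π F) :=
    RingHom.congr_fun (mapRingHom_comp_mapDomainRingHom _ (nsmulAddMonoidHom p)) F
  have hmod : π (mapDomain (p • ·) F - F ^ p) = 0 := by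
    rw [map_sub, map_pow, pow_char_eq_mapDomain, hπ, sub_self]
  rw [← ZMod.intCast_zmod_eq_zero_iff_dvd, ← eq_intCast (Int.castRingHom (ZMod p)),
    ← coeff_mapRingHom, hmod, coeff_zero, Finsupp.zero_apply]

end Frobenius

theorem conv_mapDomain_nsmul_eq_zero {G : Type*} [AddCommGroup G] {a : G → ℤ} {C : ℤ}
    (ha : ∀ y, |a y| ≤ C) {F : AddMonoidAlgebra ℤ G} (hF : conv a F = 0) {p : ℕ} (hp : p.Prime)
    (hpF : (F.coeff.sum fun _ c => |c|) * C < p) :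
    conv a (mapDomain (p • ·) F) = 0 := by
  have := Fact.mk hp
  funext x
  have hdvd : (p : ℤ) ∣ conv a (mapDomain (p • ·) F) x := by
    have := dvd_conv a (dvd_coeff_mapDomain_sub_pow (p := p) F) x
    rwa [map_sub, Pi.sub_apply, conv_pow_eq_zero hF hp.ne_zero, Pi.zero_apply, sub_zero] at this
  exact Int.eq_zero_of_abs_lt_dvd hdvd ((abs_conv_mapDomain_le ha _ F x).trans_lt hpF)

end AddMonoidAlgebra

lemma dilate_coeff {G : Type*} [AddCommGroup G] (r : ℕ) (F : AddMonoidAlgebra ℤ G) :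
    dilate r F.coeff = (mapDomain (r • ·) F).coeff := by
  classical
  funext z
  rw [dilate, finsum_mem_eq_sum_filter _ _ F.coeff.hasFiniteSupport, Finset.sum_filter,
    coeff_mapDomain, Finsupp.mapDomain, Finsupp.sum_apply, Finsupp.sum]
  simp only [Finsupp.single_apply]
  exact Finset.sum_congr (by ext; simp) fun _ _ => rfl

theorem stmt8_general (G : Type*) [AddCommGroup G]
    (f : G → ℤ) (hf : (Function.support f).Finite)
    (a : G → ℤ) (hbdd : ∃ C : ℤ, ∀ x, |a x| ≤ C)
    (hconv : ∀ x : G, ∑ᶠ y : G, f y * a (x - y) = 0) :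
    ∃ N : ℕ, ∀ p : ℕ, p.Prime → N ≤ p →
      ∀ x : G, ∑ᶠ y : G, dilate p f y * a (x - y) = 0 := by
  obtain ⟨C, ha⟩ := hbdd
  set F : AddMonoidAlgebra ℤ G := .ofCoeff (Finsupp.ofSupportFinite f hf)
  have hfF : f = F.coeff := rfl
  have hF : conv a F = 0 := funext fun x => by rw [← finsum_mul_sub_eq_conv, ← hfF, hconv x, Pi.zero_apply]
  refine ⟨((F.coeff.sum fun _ c => |c|) * C).toNat + 1, fun p hp hpN x => ?_⟩
  have hpF : (F.coeff.sum fun _ c => |c|) * C < p := by omega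
  rw [hfF, dilate_coeff, finsum_mul_sub_eq_conv, conv_mapDomain_nsmul_eq_zero ha hF hp hpF,
    Pi.zero_apply]

/-- **dilation lemma for `f*a = 0`.** If `f : G → ℤ` is finitely
supported, `a : G → ℤ` is bounded and `f * a = 0`, then `(τ_p f) * a = 0` for all
sufficiently large primes `p`. -/
theorem stmt8 (G : Type*) [AddCommGroup G] [AddGroup.FG G]
    (f : G → ℤ) (hf : (Function.support f).Finite)
    (a : G → ℤ) (hbdd : ∃ C : ℤ, ∀ x, |a x| ≤ C)
    (hconv : ∀ x : G, ∑ᶠ y : G, f y * a (x - y) = 0) :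
    ∃ N : ℕ, ∀ p : ℕ, p.Prime → N ≤ p →
      ∀ x : G, ∑ᶠ y : G, dilate p f y * a (x - y) = 0 :=
  stmt8_general G f hf a hbdd hconv
end

section
/- Let n ≥ 1 and let ξ_1,…,ξ_n ∈ ℚ/ℤ be such that e^{2πiξ_1} + ⋯ + e^{2πiξ_n} = 0 and no proper nonempty subcollection of the e^{2πiξ_j} sums to zero. Then there exists ξ ∈ ℚ/ℤ such that each ξ_j + ξ has order dividing M, where M is the product of all primes ≤ n. -/
/-!
Write the `ξ j` over a common denominator `N`, so that the `z j = e^{2πi ξ j}` are `N`-th roots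
of unity, and induct on `N`. If every prime `p ∣ N` has `p² ∤ N` and `p ≤ n`, then `N ∣ M`.
Otherwise write `N = p^a m` with `p ∤ m`, let `ζ` be a primitive `p^a`-th root of unity and
`K = ℚ(μ_{N/p})`. Each `z j = w j ζ^{b j}` with `w j ∈ μ_{N/p} ⊆ K` and `b j < p`, so grouping the
sum by `b j` gives `∑_{b<p} S_b ζ^b = 0` with `S_b ∈ K`. Since `[K(ζ) : K] = φ(p^a) / φ(p^{a-1})`
is `p` for `a ≥ 2` and `p - 1` for `a = 1`, all `S_b` vanish in the first case and are all equal
in the second, where they vanish too because `n < p` leaves some `b` unused. By minimality all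
`b j` are then equal to some `b`, and rotating by `ζ^{-b}` turns every `z j` into an
`(N/p)`-th root of unity.
-/

open scoped Real

open Polynomial IntermediateField Finset

namespace IntermediateField

variable {F L : Type*} [Field F] [Field L] [Algebra F L]

theorem adjoin_pow_pow_eq_adjoin_simple {η : L} (hη : η ≠ 0) {p m : ℕ} (hpm : p.Coprime m) :
    F⟮η ^ p, η ^ m⟯ = F⟮η⟯ := by
  apply le_antisymm
  · rw [adjoin_le_iff]
    rintro x (rfl | rfl) <;> exact pow_mem (mem_adjoin_simple_self F η) _
  · obtain ⟨u, v, huv⟩ := Nat.isCoprime_iff_coprime.mpr hpm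
    have hη_eq : (η ^ p) ^ u * (η ^ m) ^ v = η := by
      rw [← zpow_natCast, ← zpow_natCast, ← zpow_mul, ← zpow_mul, ← zpow_add₀ hη,
        mul_comm (p : ℤ), mul_comm (m : ℤ), huv, zpow_one]
    have hp : η ^ p ∈ F⟮η ^ p, η ^ m⟯ := subset_adjoin F _ (Set.mem_insert _ _)
    have hm : η ^ m ∈ F⟮η ^ p, η ^ m⟯ := subset_adjoin F _ (Set.mem_insert_of_mem _ rfl)
    rw [adjoin_simple_le_iff]
    simpa only [hη_eq] using mul_mem (zpow_mem hp u) (zpow_mem hm v)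

theorem eq_zero_of_sum_mul_pow_eq_zero (K : IntermediateField F L) (x : L) {c : ℕ → L}
    (hc : ∀ i, c i ∈ K) (h : ∑ i ∈ range (minpoly K x).natDegree, c i * x ^ i = 0) :
    ∀ i < (minpoly K x).natDegree, c i = 0 := by
  intro i hi
  have := Fintype.linearIndependent_iff.mp (linearIndependent_pow (K := K) x)
    (fun i => ⟨c i, hc i⟩) (by simpa [Algebra.smul_def, ← Fin.sum_univ_eq_sum_range] using h)
    ⟨i, hi⟩
  simpa using congrArg Subtype.val this

theorem eq_of_sum_mul_pow_eq_zero (K : IntermediateField F L) {ζ : L} {q : ℕ}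
    (hζ : IsPrimitiveRoot ζ q) (hq : 1 < q) (hdeg : (minpoly K ζ).natDegree = q - 1)
    {c : ℕ → L} (hc : ∀ i, c i ∈ K) (h : ∑ i ∈ range q, c i * ζ ^ i = 0) :
    ∀ i < q, c i = c (q - 1) := by
  -- `1 + ζ + ⋯ + ζ ^ (q - 1) = 0`, so shifting all coefficients by `c (q - 1)` kills the top one
  have hshift : ∑ i ∈ range q, (c i - c (q - 1)) * ζ ^ i = 0 := by
    simp only [sub_mul, sum_sub_distrib, ← mul_sum, h, hζ.geom_sum_eq_zero hq, mul_zero,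
      sub_zero]
  rw [← Nat.sub_add_cancel hq.le, sum_range_succ, Nat.add_sub_cancel, sub_self, zero_mul,
    add_zero] at hshift
  intro i hi
  rcases eq_or_ne i (q - 1) with rfl | hne
  · rfl
  · exact sub_eq_zero.mp <| eq_zero_of_sum_mul_pow_eq_zero K ζ (fun i => sub_mem (hc i) (hc _))
      (hdeg ▸ hshift) i (by omega)

end IntermediateField

namespace IsPrimitiveRoot

variable {L : Type*} [Field L]

theorem finrank_adjoin_eq_totient [CharZero L] {η : L} {N : ℕ} (hη : IsPrimitiveRoot η N)
    (hN : 0 < N) : Module.finrank ℚ ℚ⟮η⟯ = N.totient := by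
  rw [adjoin.finrank (hη.isIntegral hN).tower_top, ← cyclotomic_eq_minpoly_rat hη hN,
    natDegree_cyclotomic]

theorem totient_prime_pow_eq_mul_natDegree_minpoly [CharZero L] {η : L} {p a m : ℕ}
    (hη : IsPrimitiveRoot η (p ^ a * m)) (hp : p.Prime) (hpm : ¬ p ∣ m) (ha : 0 < a) :
    (p ^ a).totient = (p ^ (a - 1)).totient * (minpoly ℚ⟮η ^ p⟯ (η ^ m)).natDegree := by
  have hm : 0 < m := Nat.pos_of_ne_zero (by rintro rfl; exact hpm (dvd_zero p))
  have hcop : p.Coprime m := (Nat.Prime.coprime_iff_not_dvd hp).mpr hpm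
  have hN : 0 < p ^ a * m := Nat.mul_pos (pow_pos hp.pos a) hm
  have hηp : IsPrimitiveRoot (η ^ p) (p ^ (a - 1) * m) :=
    hη.pow hN (by rw [← mul_assoc, ← pow_succ', Nat.sub_add_cancel ha])
  have hηm : IsPrimitiveRoot (η ^ m) (p ^ a) := hη.pow hN (mul_comm _ _)
  set K := ℚ⟮η ^ p⟯
  have hint : IsIntegral K (η ^ m) := (hηm.isIntegral (pow_pos hp.pos a)).tower_top
  have : Module.Free K K⟮η ^ m⟯ := Module.Free.of_divisionRing _ _
  have htower : Module.finrank ℚ K * Module.finrank K K⟮η ^ m⟯ = Module.finrank ℚ ℚ⟮η⟯ := by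
    rw [Module.finrank_mul_finrank ℚ K K⟮η ^ m⟯,
      ← adjoin_pow_pow_eq_adjoin_simple (hη.ne_zero hN.ne') hcop, ← adjoin_simple_adjoin_simple]
    rfl
  rw [hηp.finrank_adjoin_eq_totient (Nat.mul_pos (pow_pos hp.pos _) hm),
    hη.finrank_adjoin_eq_totient hN, adjoin.finrank hint, Nat.totient_mul (hcop.pow_left _),
    Nat.totient_mul (hcop.pow_left _)] at htower
  exact (Nat.eq_of_mul_eq_mul_right (Nat.totient_pos.mpr hm) (by linarith)).symm

theorem natDegree_minpoly_adjoin_pow [CharZero L] {η : L} {p a m : ℕ}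
    (hη : IsPrimitiveRoot η (p ^ a * m)) (hp : p.Prime) (hpm : ¬ p ∣ m) (ha : 0 < a) :
    (minpoly ℚ⟮η ^ p⟯ (η ^ m)).natDegree = if a = 1 then p - 1 else p := by
  have hdeg := hη.totient_prime_pow_eq_mul_natDegree_minpoly hp hpm ha
  split_ifs with ha1
  · subst ha1
    simpa [Nat.totient_prime hp] using hdeg.symm
  · rw [← Nat.succ_pred_eq_of_pos ha, pow_succ', Nat.pred_eq_sub_one,
      Nat.totient_mul_of_prime_of_dvd hp (dvd_pow_self p (by omega)), mul_comm] at hdeg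
    exact (Nat.eq_of_mul_eq_mul_left (Nat.totient_pos.mpr (pow_pos hp.pos _)) hdeg).symm

theorem exists_eq_zpow_mul_pow {η z : L} {N p m : ℕ} [NeZero N] (hη : IsPrimitiveRoot η N)
    (hp : p.Prime) (hpm : ¬ p ∣ m) (hz : z ^ N = 1) :
    ∃ b < p, ∃ t : ℤ, z = (η ^ p) ^ t * (η ^ m) ^ b := by
  have := Fact.mk hp
  obtain ⟨e, -, rfl⟩ := hη.eq_pow_of_pow_eq_one hz
  have hm : (m : ZMod p) ≠ 0 := by rwa [Ne, ZMod.natCast_eq_zero_iff]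
  set b := ((e : ZMod p) * (m : ZMod p)⁻¹).val
  have hb : ((b * m : ℤ) : ZMod p) = (e : ℤ) := by
    push_cast
    rw [ZMod.natCast_zmod_val, mul_assoc, inv_mul_cancel₀ hm, mul_one]
  obtain ⟨t, ht⟩ := (ZMod.intCast_eq_intCast_iff_dvd_sub _ _ _).mp hb
  refine ⟨b, ZMod.val_lt _, t, ?_⟩
  rw [← pow_mul, ← zpow_natCast, ← zpow_natCast, ← zpow_mul, ← zpow_natCast,
    ← zpow_add₀ (hη.ne_zero (NeZero.ne N)), ← ht]
  congr 1
  push_cast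
  ring

end IsPrimitiveRoot

def IsMinimalVanishingSum {ι R : Type*} [Fintype ι] [AddCommMonoid R] (z : ι → R) : Prop :=
  ∑ i, z i = 0 ∧ ∀ I : Finset ι, I.Nonempty → I ≠ univ → ∑ i ∈ I, z i ≠ 0

namespace IsMinimalVanishingSum

variable {ι : Type*} [Fintype ι]

theorem mul_right {R : Type*} [Semiring R] [NoZeroDivisors R] {z : ι → R}
    (h : IsMinimalVanishingSum z) {c : R} (hc : c ≠ 0) :
    IsMinimalVanishingSum (fun i => z i * c) :=
  ⟨by rw [← sum_mul, h.1, zero_mul], fun I hI hIu => by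
    rw [← sum_mul]; exact mul_ne_zero (h.2 I hI hIu) hc⟩

theorem exists_eq_of_sum_fiber_eq_zero {R : Type*} [AddCommMonoid R] {z : ι → R}
    (h : IsMinimalVanishingSum z) {β : Type*} [DecidableEq β] [Nonempty β] (b : ι → β)
    (hb : ∀ i, ∑ j ∈ univ with b j = b i, z j = 0) : ∃ c, ∀ j, b j = c := by
  rcases isEmpty_or_nonempty ι with hι | ⟨⟨i⟩⟩
  · exact ⟨Classical.arbitrary β, hι.elim⟩
  · refine ⟨b i, fun j => ?_⟩
    by_contra hne
    refine h.2 _ ⟨i, by simp⟩ (fun huniv => hne ?_) (hb i)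
    have hj : j ∈ univ.filter (b · = b i) := by rw [huniv]; exact mem_univ j
    exact (mem_filter.mp hj).2

theorem exists_mul_pow_div_prime_eq_one {L : Type*} [Field L] [CharZero L] {N p : ℕ} {η : L}
    (hN : N ≠ 0) (hη : IsPrimitiveRoot η N) (hp : p.Prime) (hpN : p ∣ N)
    (hpn : p ^ 2 ∣ N ∨ Fintype.card ι < p) {z : ι → L} (hz : ∀ j, z j ^ N = 1)
    (hmin : IsMinimalVanishingSum z) :
    ∃ w : L, w ^ N = 1 ∧ ∀ j, (z j * w) ^ (N / p) = 1 := by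
  obtain ⟨a, m, hpm, rfl⟩ := Nat.exists_eq_pow_mul_and_not_dvd hN p hp.ne_one
  have : NeZero (p ^ a * m) := ⟨hN⟩
  have ha : 0 < a := Nat.pos_of_ne_zero fun ha => hpm (by simpa [ha] using hpN)
  set K := ℚ⟮η ^ p⟯
  set ζ := η ^ m
  choose b hb t ht using fun j => hη.exists_eq_zpow_mul_pow hp hpm (hz j)
  set S : ℕ → L := fun c => ∑ j ∈ univ with b j = c, (η ^ p) ^ t j
  have hSK : ∀ c, S c ∈ K := fun c =>
    sum_mem fun j _ => zpow_mem (mem_adjoin_simple_self ℚ (η ^ p)) (t j)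
  have hfiber : ∀ c, ∑ j ∈ univ with b j = c, z j = S c * ζ ^ c := fun c => by
    rw [sum_mul]
    exact sum_congr rfl fun j hj => by rw [ht j, (mem_filter.mp hj).2]
  have hrel : ∑ c ∈ range p, S c * ζ ^ c = 0 := by
    rw [← hmin.1, ← sum_fiberwise_of_maps_to (fun j _ => mem_range.mpr (hb j))]
    exact sum_congr rfl fun c _ => (hfiber c).symm
  have hd := hη.natDegree_minpoly_adjoin_pow hp hpm ha
  have hS : ∀ c < p, S c = 0 := by
    obtain rfl | ha2 : a = 1 ∨ 2 ≤ a := by omega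
    · have hcard : Fintype.card ι < p := hpn.resolve_left fun h =>
        hpm (Nat.dvd_of_mul_dvd_mul_left hp.pos (by simpa [sq] using h))
      obtain ⟨c₀, hc₀, hc₀b⟩ := exists_mem_notMem_of_card_lt_card
        (s := univ.image b) (t := range p) (by simpa using card_image_le.trans_lt hcard)
      have hSc₀ : S c₀ = 0 := sum_eq_zero fun j hj =>
        absurd (mem_image_of_mem b (mem_univ j)) ((mem_filter.mp hj).2 ▸ hc₀b)
      have hconst := eq_of_sum_mul_pow_eq_zero K (hη.pow (NeZero.pos _) (by simp [mul_comm]))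
        hp.one_lt (by simpa using hd) hSK hrel
      intro c hc
      rw [hconst c hc, ← hconst c₀ (mem_range.mp hc₀), hSc₀]
    · rw [if_neg (by omega)] at hd
      exact hd ▸ eq_zero_of_sum_mul_pow_eq_zero K ζ hSK (hd ▸ hrel)
  obtain ⟨c, hc⟩ := hmin.exists_eq_of_sum_fiber_eq_zero b fun i => by
    rw [hfiber, hS _ (hb i), zero_mul]
  refine ⟨(ζ ^ c)⁻¹, ?_, fun j => ?_⟩
  · rw [inv_pow, pow_right_comm, pow_right_comm η, hη.pow_eq_one, one_pow, one_pow, inv_one]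
  · rw [ht j, hc j, mul_inv_cancel_right₀ (pow_ne_zero _ (pow_ne_zero _ (hη.ne_zero hN))),
      ← zpow_natCast, ← zpow_mul, mul_comm, zpow_mul, zpow_natCast, ← pow_mul,
      Nat.mul_div_cancel' hpN, hη.pow_eq_one, one_zpow]

end IsMinimalVanishingSum

theorem Nat.dvd_primorial_of_squarefree {N n : ℕ} (hN : Squarefree N)
    (h : ∀ p, p.Prime → p ∣ N → p ≤ n) : N ∣ primorial n := by
  rw [← Nat.prod_primeFactors_of_squarefree hN, primorial_eq_prod_primesLE]
  exact prod_dvd_prod_of_subset _ _ _ fun p hp =>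
    mem_primesLE.mpr ⟨h p (prime_of_mem_primeFactors hp) (dvd_of_mem_primeFactors hp),
      prime_of_mem_primeFactors hp⟩

theorem IsMinimalVanishingSum.exists_mul_pow_primorial_eq_one {L : Type*} [Field L] [CharZero L]
    {ι : Type*} [Fintype ι] {N : ℕ} {η : L} (hN : 0 < N) (hη : IsPrimitiveRoot η N)
    {z : ι → L} (hz : ∀ j, z j ^ N = 1) (hmin : IsMinimalVanishingSum z) :
    ∃ w : L, w ^ N = 1 ∧ ∀ j, (z j * w) ^ primorial (Fintype.card ι) = 1 := by
  induction N using Nat.strong_induction_on generalizing η z with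
  | _ N ih =>
  by_cases hbad : ∃ p, p.Prime ∧ p ∣ N ∧ (p ^ 2 ∣ N ∨ Fintype.card ι < p)
  · obtain ⟨p, hp, hpN, hpn⟩ := hbad
    obtain ⟨w₀, hw₀N, hw₀⟩ := hmin.exists_mul_pow_div_prime_eq_one hN.ne' hη hp hpN hpn hz
    have hw₀0 : w₀ ≠ 0 := fun h => by simp [h, hN.ne'] at hw₀N
    obtain ⟨w₁, hw₁, hw⟩ := ih (N / p) (Nat.div_lt_self hN hp.one_lt)
      (Nat.div_pos (Nat.le_of_dvd hN hpN) hp.pos) (hη.pow hN (Nat.mul_div_cancel' hpN).symm)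
      hw₀ (hmin.mul_right hw₀0)
    refine ⟨w₀ * w₁, ?_, fun j => by simpa only [mul_assoc] using hw j⟩
    rw [mul_pow, hw₀N, one_mul, ← Nat.div_mul_cancel hpN, pow_mul, hw₁, one_pow]
  · push Not at hbad
    have hsq : Squarefree N := Nat.squarefree_iff_prime_squarefree.mpr fun p hp hpp =>
      (hbad p hp (dvd_of_mul_right_dvd hpp)).1 (by rwa [sq])
    obtain ⟨k, hk⟩ := Nat.dvd_primorial_of_squarefree hsq fun p hp hpN => (hbad p hp hpN).2
    exact ⟨1, one_pow N, fun j => by rw [mul_one, hk, pow_mul, hz, one_pow]⟩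

namespace Complex

theorem exp_two_pi_mul_I_mul_rat_pow_eq_one_iff (x : ℚ) (M : ℕ) :
    exp (2 * π * I * x) ^ M = 1 ↔ ∃ k : ℤ, M * x = k := by
  rw [← exp_nat_mul, exp_eq_one_iff]
  refine exists_congr fun k => ?_
  rw [show (M : ℂ) * (2 * π * I * x) = (M * x : ℚ) * (2 * π * I) by push_cast; ring,
    mul_left_inj' two_pi_I_ne_zero]
  exact_mod_cast Iff.rfl

theorem exists_rat_exp_two_pi_mul_I_mul_eq_of_pow_eq_one {w : ℂ} {N : ℕ} (hN : N ≠ 0)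
    (hw : w ^ N = 1) : ∃ x : ℚ, exp (2 * π * I * x) = w := by
  have : NeZero N := ⟨hN⟩
  obtain ⟨i, -, rfl⟩ := (isPrimitiveRoot_exp N hN).eq_pow_of_pow_eq_one hw
  refine ⟨i / N, ?_⟩
  rw [← exp_nat_mul]
  congr 1
  push_cast
  field_simp

end Complex

theorem stmt15_general (n : ℕ) (ξ : Fin n → ℚ)
    (hsum : ∑ j : Fin n, Complex.exp (2 * π * Complex.I * (ξ j : ℂ)) = 0)
    (hmin : ∀ I : Finset (Fin n), I.Nonempty → I ≠ Finset.univ →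
      ∑ j ∈ I, Complex.exp (2 * π * Complex.I * (ξ j : ℂ)) ≠ 0) :
    ∃ ξ' : ℚ, ∀ j : Fin n,
      ∃ z : ℤ, ((∏ p ∈ Finset.filter Nat.Prime (Finset.range (n + 1)), p : ℕ) : ℚ)
        * (ξ j + ξ') = (z : ℚ) := by
  set N := ∏ j, (ξ j).den
  have hN : 0 < N := prod_pos fun j _ => (ξ j).den_pos
  have hz : ∀ j, Complex.exp (2 * π * Complex.I * ξ j) ^ N = 1 := fun j => by
    obtain ⟨k, hk⟩ : (ξ j).den ∣ N := dvd_prod_of_mem _ (mem_univ j)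
    rw [hk, pow_mul, (Complex.exp_two_pi_mul_I_mul_rat_pow_eq_one_iff _ _).mpr
      ⟨(ξ j).num, by rw [mul_comm, Rat.mul_den_eq_num]⟩, one_pow]
  obtain ⟨w, hwN, hw⟩ := IsMinimalVanishingSum.exists_mul_pow_primorial_eq_one hN
    (Complex.isPrimitiveRoot_exp N hN.ne') hz ⟨hsum, hmin⟩
  obtain ⟨ξ', rfl⟩ := Complex.exists_rat_exp_two_pi_mul_I_mul_eq_of_pow_eq_one hN.ne' hwN
  refine ⟨ξ', fun j => ?_⟩
  have hj := hw j
  rw [← Complex.exp_add, ← mul_add, ← Rat.cast_add, Fintype.card_fin] at hj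
  exact (Complex.exp_two_pi_mul_I_mul_rat_pow_eq_one_iff _ _).mp hj

/-- **Mann's theorem.** If `e^{2πiξ₁} + ⋯ + e^{2πiξₙ} = 0` is a
minimal vanishing sum of roots of unity (ξⱼ ∈ ℚ, viewed in ℚ/ℤ), then after a
common rotation `ξ` all the `ξⱼ + ξ` have order dividing `M`, the product of the
primes `≤ n`. -/
theorem stmt15 (n : ℕ) (hn : 1 ≤ n) (ξ : Fin n → ℚ)
    (hsum : ∑ j : Fin n, Complex.exp (2 * π * Complex.I * (ξ j : ℂ)) = 0)
    (hmin : ∀ I : Finset (Fin n), I.Nonempty → I ≠ Finset.univ →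
      ∑ j ∈ I, Complex.exp (2 * π * Complex.I * (ξ j : ℂ)) ≠ 0) :
    ∃ ξ' : ℚ, ∀ j : Fin n,
      ∃ z : ℤ, ((∏ p ∈ Finset.filter Nat.Prime (Finset.range (n + 1)), p : ℕ) : ℚ)
        * (ξ j + ξ') = (z : ℚ) :=
  stmt15_general n ξ hsum hmin
end
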